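/- arXiv:2602.10850 — 6 statements merged into one kernel-verified Lean document; each statement's English description precedes it below -/
import Mathlib

section
/- Let A be a K-algebra over a field K, let u, v ∈ A and q ∈ K with vu = q·uv, where q is a primitive n-th root of unity (n > 1). Then (u + v)^n = u^n + v^n. -/
/-!
Expanding `(u + v) ^ n` in the normal form `∑ c i j • u ^ i * v ^ j` gives Gaussian binomial
coefficients `c i j = [i + j choose i]_q`. Comparing the two Pascal rules for them, obtained by
multiplying by `u + v` on the left or on the right, yields
`(1 - q ^ (i + 1)) * c (i + 1) (j + 1) = (1 - q ^ (i + j + 2)) * c i (j + 1)`.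
When `q` is a primitive `(i + j + 2)`-th root of unity the right side vanishes while
`1 - q ^ (i + 1) ≠ 0`, so all mixed terms of `(u + v) ^ n` drop out.
-/

open Finset

/-- `qBinom q i j` is the Gaussian binomial `[i + j choose i]_q`, indexed by the exponents of
`u ^ i * v ^ j` in `(u + v) ^ (i + j)`. -/
def qBinom {R : Type*} [Semiring R] (q : R) : ℕ → ℕ → R
  | 0, _ => 1
  | _ + 1, 0 => 1
  | i + 1, j + 1 => qBinom q i (j + 1) + q ^ (i + 1) * qBinom q (i + 1) j

namespace qBinom

section Semiring

variable {R : Type*} [Semiring R] (q : R)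

@[simp]
theorem zero_left (j : ℕ) : qBinom q 0 j = 1 := by
  rw [qBinom]

@[simp]
theorem zero_right (i : ℕ) : qBinom q i 0 = 1 := by
  cases i <;> rw [qBinom]

theorem succ_succ (i j : ℕ) :
    qBinom q (i + 1) (j + 1) = qBinom q i (j + 1) + q ^ (i + 1) * qBinom q (i + 1) j := by
  rw [qBinom]

theorem sum_antidiagonal_succ_smul {M : Type*} [AddCommMonoid M] [Module R M]
    (f : ℕ → ℕ → M) (n : ℕ) :
    ∑ p ∈ antidiagonal (n + 1), qBinom q p.1 p.2 • f p.1 p.2 =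
      ∑ p ∈ antidiagonal n, qBinom q p.1 p.2 • f (p.1 + 1) p.2 +
        ∑ p ∈ antidiagonal n, (q ^ p.1 * qBinom q p.1 p.2) • f p.1 (p.2 + 1) := by
  cases n with
  | zero => simp [Nat.sum_antidiagonal_succ, add_comm]
  | succ n =>
    rw [Nat.sum_antidiagonal_succ, Nat.sum_antidiagonal_succ', Nat.sum_antidiagonal_succ',
      Nat.sum_antidiagonal_succ (n := n)]
    simp only [succ_succ, add_smul, mul_smul, sum_add_distrib, zero_left, zero_right, pow_zero,
      one_mul]
    abel

end Semiring

variable {R : Type*} [CommRing R] (q : R)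

theorem succ_succ' (i j : ℕ) :
    qBinom q (i + 1) (j + 1) = q ^ (j + 1) * qBinom q i (j + 1) + qBinom q (i + 1) j := by
  induction i generalizing j with
  | zero =>
    induction j with
    | zero => simp [succ_succ, add_comm]
    | succ j ih =>
      have h₁ := succ_succ q 0 (j + 1)
      have h₀ := succ_succ q 0 j
      simp only [zero_left, mul_one] at ih h₁ h₀ ⊢
      linear_combination h₁ + q * ih - h₀
  | succ i ih_i =>
    induction j with
    | zero =>
      have h₁ := succ_succ q (i + 1) 0
      have h₀ := succ_succ q i 0
      have ih := ih_i 0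
      simp only [zero_right, mul_one] at h₁ h₀ ih ⊢
      linear_combination h₁ + ih - q * h₀
    | succ j ih_j =>
      linear_combination succ_succ q (i + 1) (j + 1) + ih_i (j + 1)
        - q ^ (j + 2) * succ_succ q i (j + 1) - succ_succ q (i + 1) j + q ^ (i + 2) * ih_j

theorem one_sub_pow_mul_succ_succ (i j : ℕ) :
    (1 - q ^ (i + 1)) * qBinom q (i + 1) (j + 1) =
      (1 - q ^ (i + j + 2)) * qBinom q i (j + 1) := by
  linear_combination succ_succ q i j - q ^ (i + 1) * succ_succ' q i j

theorem eq_zero_of_isPrimitiveRoot [IsDomain R] {i j : ℕ}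
    (hq : IsPrimitiveRoot q (i + j + 2)) :
    qBinom q (i + 1) (j + 1) = 0 := by
  have h := one_sub_pow_mul_succ_succ q i j
  rw [hq.pow_eq_one, sub_self, zero_mul] at h
  refine (mul_eq_zero.mp h).resolve_left (sub_ne_zero.mpr ?_)
  exact (hq.pow_ne_one_of_pos_of_lt i.succ_ne_zero (by omega)).symm

end qBinom

section QCommute

variable {R A : Type*} [CommSemiring R] [Semiring A] [Algebra R A] {u v : A} {q : R}

theorem mul_pow_eq_smul_pow_mul (h : v * u = q • (u * v)) (k : ℕ) :
    v * u ^ k = q ^ k • (u ^ k * v) := by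
  induction k with
  | zero => simp
  | succ k ih =>
    rw [pow_succ, ← mul_assoc, ih, smul_mul_assoc, mul_assoc, h, mul_smul_comm, smul_smul,
      ← pow_succ, ← mul_assoc]

theorem add_pow_eq_sum_qBinom (h : v * u = q • (u * v)) (n : ℕ) :
    (u + v) ^ n = ∑ p ∈ antidiagonal n, qBinom q p.1 p.2 • (u ^ p.1 * v ^ p.2) := by
  induction n with
  | zero => simp
  | succ n ih =>
    rw [qBinom.sum_antidiagonal_succ_smul q (fun i j ↦ u ^ i * v ^ j), pow_succ', ih, add_mul,
      mul_sum, mul_sum]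
    congr 1 <;> refine sum_congr rfl fun p _ ↦ ?_
    · rw [mul_smul_comm, ← mul_assoc, ← pow_succ']
    · rw [mul_smul_comm, ← mul_assoc, mul_pow_eq_smul_pow_mul h, smul_mul_assoc, mul_assoc,
        ← pow_succ', smul_smul, mul_comm]

end QCommute

/-- If `u, v` in a `K`-algebra satisfy `v u = q • (u v)` with `q` a primitive
`n`-th root of unity (`n > 1`), then `(u + v)^n = u^n + v^n`. -/
theorem add_pow_of_qcommute {K A : Type*} [Field K] [Ring A] [Algebra K A]
    (u v : A) (q : K) (n : ℕ) (hn : 1 < n) (hq : IsPrimitiveRoot q n)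
    (hcomm : v * u = q • (u * v)) :
    (u + v) ^ n = u ^ n + v ^ n := by
  obtain ⟨m, rfl⟩ : ∃ m, n = m + 2 := ⟨n - 2, by omega⟩
  have middle_vanishes : ∀ p ∈ antidiagonal m, qBinom q (p.1 + 1) (p.2 + 1) = 0 := by
    intro p hp
    rw [← HasAntidiagonal.mem_antidiagonal.mp hp] at hq
    exact qBinom.eq_zero_of_isPrimitiveRoot q hq
  rw [add_pow_eq_sum_qBinom hcomm, Nat.sum_antidiagonal_succ, Nat.sum_antidiagonal_succ',
    sum_eq_zero fun p hp ↦ by rw [middle_vanishes p hp, zero_smul]]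
  simpa using add_comm _ _
end

section
/- Under the same hypotheses as the previous commutation lemma, for all n ≥ 1: x z^n = z^n x + ([n]_q b − [n]_{q^{-1}} c^{-1}) z^{n−1}. -/
/-- The q-integer `[k]_q = 1 + q + ⋯ + q^(k-1)`. -/
def qInt {K : Type*} [Field K] (q : K) (k : ℕ) : K :=
  ∑ i ∈ Finset.range k, q ^ i

/-!
Writing `x z = z x + a` with `a = b - c⁻¹`, moving `x` through `z^(n+1)` leaves the sum
`∑_{i+j=n} z^i a z^j`. Since `z` `q`-commutes with `b` and `q⁻¹`-commutes with `c⁻¹`,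
each term `z^i b z^j` equals `q^i b z^n` (and likewise for `c⁻¹`), so the sum collapses to
`([n+1]_q b - [n+1]_{q⁻¹} c⁻¹) z^n`.
-/

open Finset

theorem mul_pow_succ_eq_pow_succ_mul_add_sum {A : Type*} [Semiring A] {x z a : A}
    (h : x * z = z * x + a) (n : ℕ) :
    x * z ^ (n + 1) = z ^ (n + 1) * x + ∑ p ∈ antidiagonal n, z ^ p.1 * a * z ^ p.2 := by
  induction n with
  | zero => simp [h]
  | succ n ih =>
    rw [pow_succ, ← mul_assoc, ih, Nat.sum_antidiagonal_succ', add_mul, mul_assoc, h, sum_mul]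
    simp only [mul_add, ← mul_assoc, pow_zero, mul_one, pow_succ]
    abel

section TwistedCommutation

variable {K A : Type*}

theorem pow_mul_eq_smul_mul_pow [CommSemiring K] [Semiring A] [Algebra K A] {z a : A} {q : K}
    (h : z * a = q • (a * z)) (n : ℕ) : z ^ n * a = q ^ n • (a * z ^ n) := by
  induction n with
  | zero => simp
  | succ n ih =>
    rw [pow_succ, mul_assoc, h, mul_smul_comm, ← mul_assoc, ih, smul_mul_assoc, smul_smul,
      ← pow_succ', mul_assoc, ← pow_succ]

theorem mul_units_inv_eq_inv_smul [Field K] [Ring A] [Algebra K A] {z : A} {c : Aˣ} {q : K}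
    (hq : q ≠ 0) (h : z * c = q • (c * z)) : z * ↑c⁻¹ = q⁻¹ • (↑c⁻¹ * z) := by
  rw [eq_inv_smul_iff₀ hq]
  calc q • (z * ↑c⁻¹) = ↑c⁻¹ * (q • (c * z)) * ↑c⁻¹ := by
        rw [mul_smul_comm, smul_mul_assoc, Units.inv_mul_cancel_left]
    _ = ↑c⁻¹ * z := by rw [← h, mul_assoc, Units.mul_inv_cancel_right]

theorem sum_antidiagonal_pow_mul_mul_pow [Field K] [Semiring A] [Algebra K A] {z a : A} {q : K}
    (h : z * a = q • (a * z)) (n : ℕ) :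
    ∑ p ∈ antidiagonal n, z ^ p.1 * a * z ^ p.2 = qInt q (n + 1) • (a * z ^ n) := by
  calc ∑ p ∈ antidiagonal n, z ^ p.1 * a * z ^ p.2
      = ∑ p ∈ antidiagonal n, q ^ p.1 • (a * z ^ n) := by
        refine sum_congr rfl fun p hp => ?_
        rw [pow_mul_eq_smul_mul_pow h, smul_mul_assoc, mul_assoc, ← pow_add,
          mem_antidiagonal.mp hp]
    _ = qInt q (n + 1) • (a * z ^ n) := by
        rw [← sum_smul, Nat.sum_antidiagonal_eq_sum_range_succ (fun i _ => q ^ i), qInt]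

end TwistedCommutation

theorem x_mul_z_pow_general {K A : Type*} [Field K] [Ring A] [Algebra K A]
    (x z : A) (b c : Aˣ) (q : K) (hq : q ≠ 0)
    (hzx : z * x = x * z + (((c⁻¹ : Aˣ) : A) - (b : A)))
    (hzc : z * (c : A) = q • ((c : A) * z))
    (hzb : z * (b : A) = q • ((b : A) * z)) :
    ∀ n : ℕ, 1 ≤ n →
      x * z ^ n
        = z ^ n * x + (qInt q n • (b : A) - qInt q⁻¹ n • ((c⁻¹ : Aˣ) : A)) * z ^ (n - 1) := by
  intro _ hn
  obtain ⟨n, rfl⟩ := Nat.exists_eq_add_of_le' hn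
  have hxz : x * z = z * x + ((b : A) - ((c⁻¹ : Aˣ) : A)) := by rw [hzx]; abel
  have hzc' := mul_units_inv_eq_inv_smul hq hzc
  simp only [mul_pow_succ_eq_pow_succ_mul_add_sum hxz, mul_sub, sub_mul, sum_sub_distrib,
    sum_antidiagonal_pow_mul_mul_pow hzb, sum_antidiagonal_pow_mul_mul_pow hzc',
    smul_mul_assoc, Nat.add_sub_cancel]

/-- Dual commutation formula: under the same hypotheses as the `z x^n` lemma,
`x z^n = z^n x + ([n]_q b - [n]_{q⁻¹} c⁻¹) z^(n-1)` for all `n ≥ 1`. -/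
theorem x_mul_z_pow {K A : Type*} [Field K] [Ring A] [Algebra K A]
    (x z : A) (b c : Aˣ) (q : K) (hq : q ≠ 0)
    (hzx : z * x = x * z + (((c⁻¹ : Aˣ) : A) - (b : A)))
    (hxc : x * (c : A) = q⁻¹ • ((c : A) * x))
    (hzc : z * (c : A) = q • ((c : A) * z))
    (hxb : x * (b : A) = q⁻¹ • ((b : A) * x))
    (hzb : z * (b : A) = q • ((b : A) * z)) :
    ∀ n : ℕ, 1 ≤ n →
      x * z ^ n
        = z ^ n * x + (qInt q n • (b : A) - qInt q⁻¹ n • ((c⁻¹ : Aˣ) : A)) * z ^ (n - 1) :=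
  x_mul_z_pow_general x z b c q hq hzx hzc hzb
end

section
/- Let A be a K-algebra with elements x, z and commuting units b, c such that zx = xz + (c^{-1} − b), zb = qbz, zc = q^{-1}cz, xb = q^{-1}bx, xc = qcx, where q ∈ Kˣ is a root of unity of order n > 1 (q^n = 1, q ≠ 1). Then x^n and z^n commute with both x and z: z x^n = x^n z and x z^n = z^n x. -/
/-! Inductively, `z x^n = x^n z + ([n]_q c⁻¹ - [n]_{q⁻¹} b) x^(n-1)` with `[n]_s = ∑_{i<n} s^i`,
the `q`-numbers coming from pushing powers of `x` past `c⁻¹` and `b`. At a root of unity `q ≠ 1`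
of order `n` both `[n]_q` and `[n]_{q⁻¹}` vanish. Exchanging the roles of `x, c⁻¹` and `z, b`
gives the same identity for `x z^n`. -/

open Finset

section QCommute

variable {R A : Type*} [CommSemiring R] [Ring A] [Algebra R A]

theorem pow_mul_eq_smul_mul_pow_s9 {y u : A} {s : R} (h : y * u = s • (u * y)) (k : ℕ) :
    y ^ k * u = s ^ k • (u * y ^ k) := by
  induction k with
  | zero => simp
  | succ k ih =>
    rw [pow_succ, mul_assoc, h, mul_smul_comm, ← mul_assoc, ih, smul_mul_assoc, smul_smul,
      mul_comm s, ← pow_succ, mul_assoc]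

theorem Units.inv_mul_eq_smul_mul_inv {y : A} {u : Aˣ} {s : R} (h : y * u = s • (u * y)) :
    ↑u⁻¹ * y = s • (y * ↑u⁻¹) := by
  calc ↑u⁻¹ * y = ↑u⁻¹ * (y * u) * ↑u⁻¹ := by rw [mul_assoc, Units.mul_inv_cancel_right]
    _ = s • (y * ↑u⁻¹) := by
      rw [h, mul_smul_comm, smul_mul_assoc, ← mul_assoc, Units.inv_mul, one_mul]

theorem mul_pow_succ_eq_of_mul_eq_add_sub {x z d e : A} {s t : R}
    (hzx : z * x = x * z + (d - e)) (hd : x * d = s • (d * x)) (he : x * e = t • (e * x))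
    (n : ℕ) :
    z * x ^ (n + 1) = x ^ (n + 1) * z +
      ((∑ i ∈ range (n + 1), s ^ i) • d - (∑ i ∈ range (n + 1), t ^ i) • e) * x ^ n := by
  induction n with
  | zero => simpa using hzx
  | succ n ih =>
    set C := (∑ i ∈ range (n + 1), s ^ i) • d - (∑ i ∈ range (n + 1), t ^ i) • e
    calc z * x ^ (n + 1 + 1)
        = x ^ (n + 1) * (z * x) + C * x ^ (n + 1) := by
          rw [pow_succ, ← mul_assoc, ih, add_mul, mul_assoc, mul_assoc, ← pow_succ]
      _ = x ^ (n + 1 + 1) * z + (x ^ (n + 1) * d - x ^ (n + 1) * e) + C * x ^ (n + 1) := by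
          rw [hzx, mul_add, ← mul_assoc, ← pow_succ, mul_sub]
      _ = _ := by
          rw [pow_mul_eq_smul_mul_pow_s9 hd, pow_mul_eq_smul_mul_pow_s9 he, sum_range_succ _ (n + 1),
            sum_range_succ _ (n + 1)]
          simp only [C, add_smul, sub_mul, add_mul, smul_mul_assoc]
          abel

end QCommute

theorem geom_sum_eq_zero_of_pow_eq_one {K : Type*} [Field K] {q : K} {n : ℕ}
    (hqn : q ^ n = 1) (hq1 : q ≠ 1) : ∑ i ∈ range n, q ^ i = 0 := by
  rw [geom_sum_eq hq1, hqn, sub_self, zero_div]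

/-- If `q` is a root of unity of order `n > 1`, then in the algebra with
`z x = x z + (c⁻¹ - b)` and the `q`-commutation relations with the units `b, c`,
the elements `x^n` and `z^n` commute with both `x` and `z`. -/
theorem x_pow_z_pow_central {K A : Type*} [Field K] [Ring A] [Algebra K A]
    (x z : A) (b c : Aˣ) (q : K) (n : ℕ) (hn : 1 < n)
    (hqn : q ^ n = 1) (hq1 : q ≠ 1)
    (hzx : z * x = x * z + (((c⁻¹ : Aˣ) : A) - (b : A)))
    (hxc : x * (c : A) = q⁻¹ • ((c : A) * x))
    (hzc : z * (c : A) = q • ((c : A) * z))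
    (hxb : x * (b : A) = q⁻¹ • ((b : A) * x))
    (hzb : z * (b : A) = q • ((b : A) * z)) :
    z * x ^ n = x ^ n * z ∧ x * z ^ n = z ^ n * x := by
  obtain ⟨m, rfl⟩ := Nat.exists_eq_add_one_of_ne_zero (by omega : n ≠ 0)
  have hq0 : q ≠ 0 := ne_zero_pow m.succ_ne_zero (hqn ▸ one_ne_zero)
  have hS : ∑ i ∈ range (m + 1), q ^ i = 0 := geom_sum_eq_zero_of_pow_eq_one hqn hq1
  have hT : ∑ i ∈ range (m + 1), q⁻¹ ^ i = 0 :=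
    geom_sum_eq_zero_of_pow_eq_one (by rw [inv_pow, hqn, inv_one]) (inv_ne_one.mpr hq1)
  have hxc' : x * ↑c⁻¹ = q • (↑c⁻¹ * x) := by
    rw [Units.inv_mul_eq_smul_mul_inv hxc, smul_smul, mul_inv_cancel₀ hq0, one_smul]
  have hzc' : z * ↑c⁻¹ = q⁻¹ • (↑c⁻¹ * z) := by
    rw [Units.inv_mul_eq_smul_mul_inv hzc, smul_smul, inv_mul_cancel₀ hq0, one_smul]
  have hxz : x * z = z * x + ((b : A) - ↑c⁻¹) := by rw [hzx]; abel
  constructor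
  · rw [mul_pow_succ_eq_of_mul_eq_add_sub hzx hxc' hxb, hS, hT]
    simp
  · rw [mul_pow_succ_eq_of_mul_eq_add_sub hxz hzb hzc', hS, hT]
    simp
end

section
/- Let G be a group, R a K-algebra on which G acts, and suppose x ∈ R satisfies g·x·g^{-1} = χ(g)^{-1} x for a character χ: G → Kˣ in a skew group algebra R # G. Let V be a finite-dimensional simple module over R # G on which left multiplication by x is injective (x-torsion-free). If there is g ∈ G such that the left-multiplication operator of x on V has an eigenvector with nonzero eigenvalue λ, and dim V = n, then χ(g)^t = 1 for some 1 ≤ t ≤ n. In particular every element of the image of χ obtained this way is a root of unity. -/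
/-!
The relation `T S = μ S T` makes `S ^ k v` an eigenvector of `T` with eigenvalue `μ ^ k * lam`.
If no `μ ^ t` with `1 ≤ t ≤ n` were `1`, the eigenvalues `μ ^ k * lam`, `0 ≤ k ≤ n`, would be
pairwise distinct, giving `n + 1` linearly independent eigenvectors in an `n`-dimensional space.
-/

open Module

theorem injOn_pow_Iic_of_pow_ne_one {G₀ : Type*} [GroupWithZero G₀] {μ : G₀} (hμ : μ ≠ 0)
    {n : ℕ} (h : ∀ t, 1 ≤ t → t ≤ n → μ ^ t ≠ 1) : Set.InjOn (μ ^ ·) (Set.Iic n) := by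
  intro i hi j hj (hij : μ ^ i = μ ^ j)
  by_contra hne
  wlog hlt : i < j generalizing i j
  · exact this hj hi hij.symm (Ne.symm hne) (by omega)
  refine h (j - i) (by omega) (by simp only [Set.mem_Iic] at hj; omega) ?_
  rw [pow_sub₀ μ hμ hlt.le, ← hij, mul_inv_cancel₀ (pow_ne_zero _ hμ)]

namespace Module.End

variable {R M : Type*} [CommRing R] [AddCommGroup M] [Module R M]

theorem HasEigenvector.apply_of_comp_eq_smul_comp {T S : End R M} {μ lam : R} {v : M}
    (hTS : T ∘ₗ S = μ • (S ∘ₗ T)) (hS : Function.Injective S) (hv : T.HasEigenvector lam v) :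
    T.HasEigenvector (μ * lam) (S v) := by
  refine ⟨mem_eigenspace_iff.mpr ?_, (map_ne_zero_iff S hS).mpr hv.2⟩
  calc T (S v) = μ • S (T v) := congr($hTS v)
    _ = (μ * lam) • S v := by rw [hv.apply_eq_smul, map_smul, smul_smul]

theorem HasEigenvector.pow_apply_of_comp_eq_smul_comp {T S : End R M} {μ lam : R} {v : M}
    (hTS : T ∘ₗ S = μ • (S ∘ₗ T)) (hS : Function.Injective S) (hv : T.HasEigenvector lam v)
    (k : ℕ) : T.HasEigenvector (μ ^ k * lam) ((S ^ k) v) := by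
  induction k with
  | zero => simpa using hv
  | succ k ih =>
    rw [pow_succ' S, mul_apply, pow_succ' μ, mul_assoc]
    exact ih.apply_of_comp_eq_smul_comp hTS hS

theorem card_le_finrank_of_injective_hasEigenvalue {K V ι : Type*} [Field K]
    [AddCommGroup V] [Module K V] [FiniteDimensional K V] [Fintype ι] (f : End K V)
    (μ : ι → K) (hμ : Function.Injective μ) (h : ∀ i, f.HasEigenvalue (μ i)) :
    Fintype.card ι ≤ finrank K V := by
  choose v hv using fun i ↦ (h i).exists_hasEigenvector
  exact (f.eigenvectors_linearIndependent' μ hμ v hv).fintype_card_le_finrank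

end Module.End

theorem scalar_is_root_of_unity_general {K V : Type*} [Field K]
    [AddCommGroup V] [Module K V] [FiniteDimensional K V]
    (T S : V →ₗ[K] V) (hS : Function.Bijective S) (μ : K) (hμ : μ ≠ 0)
    (hTS : T ∘ₗ S = μ • (S ∘ₗ T))
    (lam : K) (hlam : lam ≠ 0) (v : V) (hv : v ≠ 0) (hTv : T v = lam • v)
    (n : ℕ) (hdim : Module.finrank K V = n) :
    ∃ t : ℕ, 1 ≤ t ∧ t ≤ n ∧ μ ^ t = 1 := by
  by_contra! h
  have hvT : End.HasEigenvector T lam v := ⟨End.mem_eigenspace_iff.mpr hTv, hv⟩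
  have hinj : Function.Injective fun k : Fin (n + 1) ↦ μ ^ (k : ℕ) * lam := fun i j hij ↦
    Fin.ext <| injOn_pow_Iic_of_pow_ne_one hμ h (Set.mem_Iic.mpr (Fin.is_le i))
      (Set.mem_Iic.mpr (Fin.is_le j)) (mul_right_cancel₀ hlam hij)
  have hcard := End.card_le_finrank_of_injective_hasEigenvalue T _ hinj fun k ↦
    End.hasEigenvalue_of_hasEigenvector (hvT.pow_apply_of_comp_eq_smul_comp hTS hS.injective k)
  rw [Fintype.card_fin, hdim] at hcard
  omega

/-- If `T, S` are endomorphisms of an `n`-dimensional vector space over an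
algebraically closed field, `S` invertible, `T ∘ S = μ • (S ∘ T)` with `μ ≠ 0`,
and `T` has an eigenvector with nonzero eigenvalue, then `μ^t = 1` for some
`1 ≤ t ≤ n`. In particular `μ` is a root of unity. -/
theorem scalar_is_root_of_unity {K V : Type*} [Field K] [IsAlgClosed K]
    [AddCommGroup V] [Module K V] [FiniteDimensional K V]
    (T S : V →ₗ[K] V) (hS : Function.Bijective S) (μ : K) (hμ : μ ≠ 0)
    (hTS : T ∘ₗ S = μ • (S ∘ₗ T))
    (lam : K) (hlam : lam ≠ 0) (v : V) (hv : v ≠ 0) (hTv : T v = lam • v)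
    (n : ℕ) (hdim : Module.finrank K V = n) :
    ∃ t : ℕ, 1 ≤ t ∧ t ≤ n ∧ μ ^ t = 1 :=
  scalar_is_root_of_unity_general T S hS μ hμ hTS lam hlam v hv hTv n hdim
end

section
/- Let K be algebraically closed of characteristic 0, q a primitive n-th root of unity, and α, α' ∈ Kˣ, λ₀, λ₀' ∈ Kˣ. Let V, V' = K^n with operators X(v_i) = q^i α v_i, C(v_i)=v_{i+1} (indices mod n, with C(v_{n−1}) = λ₀ v₀), and analogously X', C' with α', λ₀'. Then there is a linear isomorphism f: V → V' with f∘X = X'∘f and f∘C = C'∘f if and only if λ₀ = λ₀' and α = q^i α' for some 0 ≤ i < n. -/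
/-!
An intertwiner `f` conjugates `C` into `C'`, so it preserves the determinant, which is
`± lam₀` because `C` is a permutation matrix times a diagonal one; and it carries the
`α`-eigenvector `e₀` of `X` to an `α`-eigenvector of the diagonal map `X'`, so `α` is one of the
diagonal entries `q ^ j * α'`.

Conversely, if `lam₀ = lam₀'` and `α = q ^ i * α'`, then `C = C'` and `X = q ^ i • X'`. The relation
`X' * C = q • (C * X')` gives `X' * C ^ i = q ^ i • (C ^ i * X')`, so `C ^ i`, which is invertible
since `det C = ± lam₀ ≠ 0`, is the required intertwiner.
-/

section
variable {K : Type*} [Field K] {n : ℕ}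

theorem pow_val_add {q : K} (hq : q ^ n = 1) (a b : Fin n) :
    q ^ ((a + b : Fin n) : ℕ) = q ^ (a : ℕ) * q ^ (b : ℕ) := by
  rw [Fin.val_add, ← pow_eq_pow_mod _ hq, pow_add]

theorem apply_eq_mul_of_map_single (L : (Fin n → K) →ₗ[K] (Fin n → K)) (d : Fin n → K)
    (h : ∀ i, L (Pi.single i 1) = d i • Pi.single i 1) (v : Fin n → K) : L v = d * v := by
  have hL : L = Matrix.toLin' (Matrix.diagonal d) :=
    (Pi.basisFun K (Fin n)).ext fun i => by
      rw [Pi.basisFun_apply, h, ← Pi.single_smul', smul_eq_mul, mul_one]; simp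
  funext k
  simp [hL, Matrix.mulVec_diagonal]

theorem exists_eq_of_apply_eq_smul_of_map_single (L : (Fin n → K) →ₗ[K] (Fin n → K))
    (d : Fin n → K) (h : ∀ i, L (Pi.single i 1) = d i • Pi.single i 1) {v : Fin n → K}
    (hv0 : v ≠ 0) {a : K} (hv : L v = a • v) : ∃ j, a = d j := by
  obtain ⟨j, hj⟩ := Function.ne_iff.mp hv0
  have hvj := congrFun (apply_eq_mul_of_map_single L d h v) j
  rw [hv, Pi.smul_apply, smul_eq_mul, Pi.mul_apply] at hvj
  exact ⟨j, mul_right_cancel₀ hj hvj⟩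

variable [NeZero n]

theorem toMatrix'_eq_permMatrix_mul_diagonal (C : (Fin n → K) →ₗ[K] (Fin n → K))
    (μ : Fin n → K) (h : ∀ i, C (Pi.single i 1) = μ i • Pi.single (i + 1) 1) :
    LinearMap.toMatrix' C
      = Equiv.Perm.permMatrix K (Equiv.subRight (1 : Fin n)) * Matrix.diagonal μ := by
  ext k i
  rw [LinearMap.toMatrix'_apply, h, Matrix.mul_diagonal]
  simp [Pi.single_apply, sub_eq_iff_eq_add]

theorem det_eq_sign_mul_prod (C : (Fin n → K) →ₗ[K] (Fin n → K)) (μ : Fin n → K)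
    (h : ∀ i, C (Pi.single i 1) = μ i • Pi.single (i + 1) 1) :
    LinearMap.det C = Equiv.Perm.sign (Equiv.subRight (1 : Fin n)) * ∏ i, μ i := by
  rw [← LinearMap.det_toMatrix', toMatrix'_eq_permMatrix_mul_diagonal C μ h, Matrix.det_mul,
    Matrix.det_permutation, Matrix.det_diagonal]

theorem prod_ite_val_add_one_eq (a : K) :
    (∏ i : Fin n, if (i : ℕ) + 1 = n then a else 1) = a := by
  obtain ⟨m, rfl⟩ := Nat.exists_eq_succ_of_ne_zero (NeZero.ne n)
  have hlast : ∀ i : Fin (m + 1), (i : ℕ) + 1 = m + 1 ↔ i = Fin.last m := by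
    intro i
    rw [Fin.ext_iff, Fin.val_last]
    omega
  simp only [hlast, Fintype.prod_ite_eq']

theorem det_eq_sign_mul_of_map_single (C : (Fin n → K) →ₗ[K] (Fin n → K)) (lam : K)
    (h : ∀ i : Fin n,
      C (Pi.single i 1) = (if (i : ℕ) + 1 = n then lam else 1) • Pi.single (i + 1) 1) :
    LinearMap.det C = Equiv.Perm.sign (Equiv.subRight (1 : Fin n)) * lam := by
  rw [det_eq_sign_mul_prod C _ h, prod_ite_val_add_one_eq]

theorem semiconjBy_smul_of_map_single {q : K} (hq : q ^ n = 1) (β : K) (μ : Fin n → K)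
    (X C : (Fin n → K) →ₗ[K] (Fin n → K))
    (hX : ∀ i : Fin n, X (Pi.single i 1) = (q ^ (i : ℕ) * β) • Pi.single i 1)
    (hC : ∀ i, C (Pi.single i 1) = μ i • Pi.single (i + 1) 1) :
    SemiconjBy X C (q • C) :=
  (Pi.basisFun K (Fin n)).ext fun i => by
    simp only [Pi.basisFun_apply, Module.End.mul_apply, LinearMap.smul_apply, hX, hC, map_smul,
      smul_smul, pow_val_add hq, Fin.val_one', ← pow_eq_pow_mod _ hq]
    ring_nf

end

theorem pow_apply_smul_eq_of_semiconjBy {K M : Type*} [Field K] [AddCommGroup M] [Module K M]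
    {X C : Module.End K M} {q : K} (h : SemiconjBy X C (q • C)) (k : ℕ) (v : M) :
    (C ^ k) ((q ^ k • X) v) = X ((C ^ k) v) := by
  have hv := LinearMap.congr_fun (h.pow_right k).eq v
  rw [smul_pow, Module.End.mul_apply, Module.End.mul_apply, LinearMap.smul_apply] at hv
  rw [LinearMap.smul_apply, map_smul, hv]

theorem Vx_iso_criterion_general {K : Type*} [Field K]
    (n : ℕ) [NeZero n] (q : K) (hq : IsPrimitiveRoot q n)
    (α α' lam₀ lam₀' : K)
    (hlam₀ : lam₀ ≠ 0)
    (X C X' C' : (Fin n → K) →ₗ[K] (Fin n → K))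
    (hX : ∀ i : Fin n, X (Pi.single i 1 : Fin n → K)
      = (q ^ (i : ℕ) * α) • (Pi.single i 1 : Fin n → K))
    (hC : ∀ i : Fin n, C (Pi.single i 1 : Fin n → K)
      = (if (i : ℕ) + 1 = n then lam₀ else 1) • (Pi.single (i + 1) 1 : Fin n → K))
    (hX' : ∀ i : Fin n, X' (Pi.single i 1 : Fin n → K)
      = (q ^ (i : ℕ) * α') • (Pi.single i 1 : Fin n → K))
    (hC' : ∀ i : Fin n, C' (Pi.single i 1 : Fin n → K)
      = (if (i : ℕ) + 1 = n then lam₀' else 1) • (Pi.single (i + 1) 1 : Fin n → K)) :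
    (∃ f : (Fin n → K) ≃ₗ[K] (Fin n → K),
        (∀ v, f (X v) = X' (f v)) ∧ (∀ v, f (C v) = C' (f v)))
      ↔ (lam₀ = lam₀' ∧ ∃ i : Fin n, α = q ^ (i : ℕ) * α') := by
  have hsign : IsUnit ((Equiv.Perm.sign (Equiv.subRight (1 : Fin n)) : ℤ) : K) :=
    (Equiv.Perm.sign _).isUnit.map (Int.castRingHom K)
  constructor
  · rintro ⟨f, hfX, hfC⟩
    have hconj : (f : _ →ₗ[K] _) ∘ₗ C ∘ₗ f.symm = C' := LinearMap.ext fun v => by simp [hfC]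
    have hdet := LinearMap.det_conj C f
    rw [hconj, det_eq_sign_mul_of_map_single C lam₀ hC,
      det_eq_sign_mul_of_map_single C' lam₀' hC'] at hdet
    have heigen : X' (f (Pi.single 0 1)) = α • f (Pi.single 0 1) := by simp [← hfX, hX]
    exact ⟨hsign.mul_left_cancel hdet.symm, exists_eq_of_apply_eq_smul_of_map_single X' _ hX'
      (f.map_ne_zero_iff.2 (Pi.single_ne_zero_iff.2 one_ne_zero)) heigen⟩
  · rintro ⟨rfl, i, rfl⟩
    obtain rfl : C = C' := (Pi.basisFun K (Fin n)).ext fun j => by simp [hC, hC']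
    obtain rfl : X = q ^ (i : ℕ) • X' := (Pi.basisFun K (Fin n)).ext fun j => by
      simp only [Pi.basisFun_apply, LinearMap.smul_apply, hX, hX', smul_smul]
      ring_nf
    have hunit : IsUnit (LinearMap.det (C ^ (i : ℕ))) := by
      rw [map_pow, det_eq_sign_mul_of_map_single C lam₀ hC]
      exact (hsign.mul hlam₀.isUnit).pow _
    refine ⟨LinearMap.equivOfIsUnitDet hunit, fun v => ?_, fun v => ?_⟩
    · rw [LinearMap.equivOfIsUnitDet_apply, LinearMap.equivOfIsUnitDet_apply]
      exact pow_apply_smul_eq_of_semiconjBy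
        (semiconjBy_smul_of_map_single hq.pow_eq_one _ _ X' C hX' hC) i v
    · rw [LinearMap.equivOfIsUnitDet_apply, LinearMap.equivOfIsUnitDet_apply]
      exact LinearMap.congr_fun (Commute.self_pow C i).symm.eq v

/-- Isomorphism criterion for the modules `V_x(α, λ)`: with `X e_i = q^i α e_i`,
`C e_i = e_{i+1}` (cyclically, with `C e_{n-1} = lam₀ e_0`), and similarly
`X', C'` for `α', lam₀'`, there is a linear isomorphism intertwining `(X, C)` with
`(X', C')` if and only if `lam₀ = lam₀'` and `α = q^i α'` for some `0 ≤ i < n`. -/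
theorem Vx_iso_criterion {K : Type*} [Field K] [IsAlgClosed K] [CharZero K]
    (n : ℕ) [NeZero n] (q : K) (hq : IsPrimitiveRoot q n)
    (α α' lam₀ lam₀' : K) (hα : α ≠ 0) (hα' : α' ≠ 0)
    (hlam₀ : lam₀ ≠ 0) (hlam₀' : lam₀' ≠ 0)
    (X C X' C' : (Fin n → K) →ₗ[K] (Fin n → K))
    (hX : ∀ i : Fin n, X (Pi.single i 1 : Fin n → K)
      = (q ^ (i : ℕ) * α) • (Pi.single i 1 : Fin n → K))
    (hC : ∀ i : Fin n, C (Pi.single i 1 : Fin n → K)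
      = (if (i : ℕ) + 1 = n then lam₀ else 1) • (Pi.single (i + 1) 1 : Fin n → K))
    (hX' : ∀ i : Fin n, X' (Pi.single i 1 : Fin n → K)
      = (q ^ (i : ℕ) * α') • (Pi.single i 1 : Fin n → K))
    (hC' : ∀ i : Fin n, C' (Pi.single i 1 : Fin n → K)
      = (if (i : ℕ) + 1 = n then lam₀' else 1) • (Pi.single (i + 1) 1 : Fin n → K)) :
    (∃ f : (Fin n → K) ≃ₗ[K] (Fin n → K),
        (∀ v, f (X v) = X' (f v)) ∧ (∀ v, f (C v) = C' (f v)))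
      ↔ (lam₀ = lam₀' ∧ ∃ i : Fin n, α = q ^ (i : ℕ) * α') :=
  Vx_iso_criterion_general n q hq α α' lam₀ lam₀' hlam₀ X C X' C' hX hC hX' hC'
end

section
/- Let K be algebraically closed of characteristic 0, n ≥ 1, and let V = ⊕_{i=0}^{n-1} K v_i with operators X, Y, and a family of commuting diagonal operators D_g (g in a group G) satisfying: X v_i = v_{i+1} for i < n−1, X v_{n−1} = λ v_0 with λ ≠ 0; D_g v_i = ρ_i(g) v_i where for each i ≠ j there is g with ρ_i(g) ≠ ρ_j(g). Then any subspace W ≤ V invariant under X and all D_g is 0 or V. -/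
/-!
Pick `w ∈ W` nonzero, with `w i ≠ 0`. For each `j ≠ i` choose `g` with `ρ i g ≠ ρ j g`; the
operator `D g - ρ j g` keeps `W` and kills the `j`-th coordinate but not the `i`-th, so the
product of these operators sends `w` to a nonzero multiple of `e_i`, which therefore lies in `W`.
Since `X` sends `e_j` to a nonzero multiple of `e_{j+1}`, cyclically, `W` then contains every `e_j`.
-/

theorem Finset.prod_mul_mem_of_forall_mul_mem {ι A : Type*} [CommMonoid A] {W : Set A}
    {s : Finset ι} {e : ι → A} (he : ∀ j ∈ s, ∀ w ∈ W, e j * w ∈ W) :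
    ∀ w ∈ W, (∏ j ∈ s, e j) * w ∈ W :=
  Finset.prod_induction e (fun c => ∀ w ∈ W, c * w ∈ W)
    (fun a b ha hb w hw => mul_assoc a b w ▸ ha _ (hb w hw))
    (fun w hw => (one_mul w).symm ▸ hw) he

theorem Pi.mulLeft_eq_of_apply_single {ι K : Type*} [Field K] [Finite ι] [DecidableEq ι]
    {f : (ι → K) →ₗ[K] (ι → K)} {c : ι → K}
    (hf : ∀ i, f (Pi.single i 1) = c i • Pi.single i 1) :
    f = LinearMap.mulLeft K c :=
  (Pi.basisFun K ι).ext fun i => by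
    rw [Pi.basisFun_apply, hf, LinearMap.mulLeft_apply, ← Pi.single_mul_right,
      ← Pi.single_smul', smul_eq_mul]

theorem Submodule.exists_single_mem_of_mul_mem {ι G K : Type*} [Field K] [Fintype ι]
    [DecidableEq ι] (ρ : ι → G → K) (hsep : ∀ i j, i ≠ j → ∃ g, ρ i g ≠ ρ j g)
    (W : Submodule K (ι → K)) (hW : ∀ g, ∀ w ∈ W, (fun k => ρ k g) * w ∈ W) (hW0 : W ≠ ⊥) :
    ∃ i, Pi.single i 1 ∈ W := by
  obtain ⟨w, hwW, hw0⟩ := W.ne_bot_iff.mp hW0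
  obtain ⟨i, hi⟩ := Function.ne_iff.mp hw0
  have separator : ∀ j, ∃ e : ι → K, (j ≠ i → e j = 0) ∧ e i ≠ 0 ∧ ∀ v ∈ W, e * v ∈ W := by
    intro j
    by_cases hj : j = i
    · exact ⟨1, fun h => absurd hj h, one_ne_zero, fun v hv => (one_mul v).symm ▸ hv⟩
    obtain ⟨g, hg⟩ := hsep i j (Ne.symm hj)
    refine ⟨fun k => ρ k g - ρ j g, fun _ => sub_self _, sub_ne_zero.mpr hg, fun v hv => ?_⟩
    have : (fun k => ρ k g - ρ j g) * v = (fun k => ρ k g) * v - ρ j g • v := by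
      ext k; simp [sub_mul]
    exact this ▸ W.sub_mem (hW g v hv) (W.smul_mem _ hv)
  choose e he_zero he_ne he_mem using separator
  set P := ∏ j, e j
  have hP (k : ι) : P k = ∏ j, e j k := Finset.prod_apply k _ _
  have hPw : P * w = Pi.single i (P i * w i) := by
    ext k
    by_cases hk : k = i
    · subst hk; simp
    · rw [Pi.mul_apply, hP,
        Finset.prod_eq_zero (f := fun j => e j k) (Finset.mem_univ k) (he_zero k hk), zero_mul,
        Pi.single_eq_of_ne hk]
  have hPi : P i * w i ≠ 0 := by
    simpa [hP, Finset.prod_ne_zero_iff, he_ne] using hi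
  refine ⟨i, (W.smul_mem_iff hPi).mp ?_⟩
  rw [← Pi.single_smul', smul_eq_mul, mul_one, ← hPw]
  exact Finset.prod_mul_mem_of_forall_mul_mem (fun j _ => he_mem j) w hwW

open Fin.NatCast in
theorem Submodule.eq_top_of_single_mem_of_cyclic_shift {K : Type*} [Field K] {n : ℕ} [NeZero n]
    {X : (Fin n → K) →ₗ[K] (Fin n → K)} {a : Fin n → K} (ha : ∀ i, a i ≠ 0)
    (hX : ∀ i, X (Pi.single i 1) = a i • Pi.single (i + 1) 1) {W : Submodule K (Fin n → K)}
    (hWX : ∀ w ∈ W, X w ∈ W) {i : Fin n} (hi : Pi.single i 1 ∈ W) : W = ⊤ := by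
  have step (j : Fin n) (hj : Pi.single j 1 ∈ W) : Pi.single (j + 1) 1 ∈ W :=
    (W.smul_mem_iff (ha j)).mp (hX j ▸ hWX _ hj)
  have shifted (m : ℕ) : Pi.single (i + m) 1 ∈ W := by
    induction m with
    | zero => simpa using hi
    | succ m ih => simpa [Nat.cast_succ, ← add_assoc] using step _ ih
  have hall (j : Fin n) : Pi.single j 1 ∈ W := by
    simpa [Fin.cast_val_eq_self] using shifted (j - i).val
  rw [eq_top_iff, ← (Pi.basisFun K (Fin n)).span_eq, Submodule.span_le]
  rintro _ ⟨j, rfl⟩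
  simpa using hall j

theorem Vx_diffop_simple_general {K : Type*} [Field K]
    (n : ℕ) [NeZero n] {G : Type*}
    (lam : K) (hlam : lam ≠ 0)
    (X : (Fin n → K) →ₗ[K] (Fin n → K)) (D : G → ((Fin n → K) →ₗ[K] (Fin n → K)))
    (ρ : Fin n → G → K)
    (hX : ∀ i : Fin n, X (Pi.single i 1 : Fin n → K)
      = (if (i : ℕ) + 1 = n then lam else 1) • (Pi.single (i + 1) 1 : Fin n → K))
    (hD : ∀ (g : G) (i : Fin n),
      D g (Pi.single i 1 : Fin n → K) = ρ i g • (Pi.single i 1 : Fin n → K))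
    (hsep : ∀ i j : Fin n, i ≠ j → ∃ g : G, ρ i g ≠ ρ j g)
    (W : Submodule K (Fin n → K))
    (hWX : ∀ w ∈ W, X w ∈ W) (hWD : ∀ (g : G), ∀ w ∈ W, D g w ∈ W) :
    W = ⊥ ∨ W = ⊤ := by
  refine or_iff_not_imp_left.mpr fun hW0 => ?_
  have hWmul (g : G) (w : Fin n → K) (hw : w ∈ W) : (fun k => ρ k g) * w ∈ W := by
    simpa [Pi.mulLeft_eq_of_apply_single (hD g)] using hWD g w hw
  obtain ⟨i, hi⟩ := W.exists_single_mem_of_mul_mem ρ hsep hWmul hW0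
  have hweights (j : Fin n) : (if (j : ℕ) + 1 = n then lam else 1) ≠ 0 := by
    split_ifs
    exacts [hlam, one_ne_zero]
  exact Submodule.eq_top_of_single_mem_of_cyclic_shift hweights hX hWX hi

/-- Simplicity of `V_x(ρ, λ, μ)` in the differential operator case: on
`V = K^n` let `X` be the cyclic shift with `X e_{n-1} = lam • e_0`, `lam ≠ 0`,
and let `(D g)` be a family of diagonal operators `D g (e_i) = ρ i g • e_i`
whose eigenvalues separate distinct indices. Then every subspace invariant
under `X` and all `D g` is `0` or `V`. -/
theorem Vx_diffop_simple {K : Type*} [Field K] [IsAlgClosed K] [CharZero K]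
    (n : ℕ) [NeZero n] {G : Type*}
    (lam : K) (hlam : lam ≠ 0)
    (X : (Fin n → K) →ₗ[K] (Fin n → K)) (D : G → ((Fin n → K) →ₗ[K] (Fin n → K)))
    (ρ : Fin n → G → K)
    (hX : ∀ i : Fin n, X (Pi.single i 1 : Fin n → K)
      = (if (i : ℕ) + 1 = n then lam else 1) • (Pi.single (i + 1) 1 : Fin n → K))
    (hD : ∀ (g : G) (i : Fin n),
      D g (Pi.single i 1 : Fin n → K) = ρ i g • (Pi.single i 1 : Fin n → K))
    (hsep : ∀ i j : Fin n, i ≠ j → ∃ g : G, ρ i g ≠ ρ j g)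
    (W : Submodule K (Fin n → K))
    (hWX : ∀ w ∈ W, X w ∈ W) (hWD : ∀ (g : G), ∀ w ∈ W, D g w ∈ W) :
    W = ⊥ ∨ W = ⊤ :=
  Vx_diffop_simple_general n lam hlam X D ρ hX hD hsep W hWX hWD
end
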